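/- arXiv:1706.00023 — 5 statements merged into one kernel-verified Lean document; each statement's English description precedes it below -/
import Mathlib

section
/- For any real θ and the fermionic swap operator f_swap on distinct modes p ≠ q, conjugation of a_p† by the unitary e^{i f_swap θ} gives e^{i f_swap θ} a_p† e^{−i f_swap θ} = (1/2)(e^{−2iθ}(a_p† − a_q†) + (a_p† + a_q†)), and symmetrically for a_q†. -/
/-!
Write `f` for the swap operator. The anticommutation relations give `[f, a_p†] = a_q† - a_p†`
and `[f, a_q†] = a_p† - a_q†`, so `a_p† - a_q†` and `a_p† + a_q†` are eigenvectors of `ad f`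
with eigenvalues `-2` and `0`. Conjugation by `e^{z f}` multiplies an eigenvector of `ad f` with
eigenvalue `c` by `e^{z c}` (Hadamard's lemma), and `a_p†`, `a_q†` are half the sum and half the
difference of these two eigenvectors.
-/

section Conjugation

variable {𝕂 A : Type*} [RCLike 𝕂] [NormedRing A] [NormedAlgebra 𝕂 A] [CompleteSpace A]

theorem NormedSpace.exp_mul_mul_exp_neg_of_mul_sub_mul_eq_smul {a X : A} {c : 𝕂}
    (h : a * X - X * a = c • X) :
    NormedSpace.exp a * X * NormedSpace.exp (-a) = NormedSpace.exp c • X := by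
  let : NormedAlgebra ℚ A := NormedAlgebra.restrictScalars ℚ 𝕂 A
  have hsemi : SemiconjBy X (algebraMap 𝕂 A c + a) a := by
    rw [Algebra.smul_def, sub_eq_iff_eq_add] at h
    rw [SemiconjBy, mul_add, h, Algebra.commutes]
  rw [← hsemi.exp_right.eq, NormedSpace.exp_add_of_commute (Algebra.commute_algebraMap_left c a),
    ← NormedSpace.algebraMap_exp_comm, mul_assoc, mul_assoc,
    ← NormedSpace.exp_add_of_commute (Commute.refl a).neg_right, add_neg_cancel,
    NormedSpace.exp_zero, mul_one, ← Algebra.commutes, Algebra.smul_def]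

theorem NormedSpace.exp_smul_mul_mul_exp_neg_smul_of_mul_sub_mul_eq_smul {a X : A} {c : 𝕂}
    (h : a * X - X * a = c • X) (z : 𝕂) :
    NormedSpace.exp (z • a) * X * NormedSpace.exp ((-z) • a) = NormedSpace.exp (z * c) • X := by
  rw [neg_smul]
  refine NormedSpace.exp_mul_mul_exp_neg_of_mul_sub_mul_eq_smul ?_
  rw [smul_mul_assoc, mul_smul_comm, ← smul_sub, h, smul_smul]

end Conjugation

section Fermions

variable {A : Type*} [Ring A]

theorem mul_mul_sub_mul_mul_eq (x y z : A) :
    x * y * z - z * (x * y) = x * (y * z + z * y) - (x * z + z * x) * y := by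
  noncomm_ring

def fermionicSwap (ap aq apd aqd : A) : A := 1 + apd * aq + aqd * ap - apd * ap - aqd * aq

theorem fermionicSwap_comm (ap aq apd aqd : A) :
    fermionicSwap ap aq apd aqd = fermionicSwap aq ap aqd apd := by
  unfold fermionicSwap
  abel

variable {ap aq apd aqd : A}

theorem fermionicSwap_mul_sub_mul_fermionicSwap_fst (hpp : ap * apd + apd * ap = 1)
    (hqp : aq * apd + apd * aq = 0) (hdd : apd * aqd + aqd * apd = 0) (hpd2 : apd * apd = 0) :
    fermionicSwap ap aq apd aqd * apd - apd * fermionicSwap ap aq apd aqd = aqd - apd := by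
  rw [add_comm] at hdd
  have hexpand : fermionicSwap ap aq apd aqd * apd - apd * fermionicSwap ap aq apd aqd =
      (apd * aq * apd - apd * (apd * aq)) + (aqd * ap * apd - apd * (aqd * ap))
        - (apd * ap * apd - apd * (apd * ap)) - (aqd * aq * apd - apd * (aqd * aq)) := by
    unfold fermionicSwap
    noncomm_ring
  simp only [hexpand, mul_mul_sub_mul_mul_eq, hpp, hqp, hdd, hpd2]
  noncomm_ring

theorem fermionicSwap_mul_sub_mul_fermionicSwap_snd (hqq : aq * aqd + aqd * aq = 1)
    (hpq : ap * aqd + aqd * ap = 0) (hdd : apd * aqd + aqd * apd = 0) (hqd2 : aqd * aqd = 0) :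
    fermionicSwap ap aq apd aqd * aqd - aqd * fermionicSwap ap aq apd aqd = apd - aqd := by
  rw [add_comm] at hdd
  rw [fermionicSwap_comm]
  exact fermionicSwap_mul_sub_mul_fermionicSwap_fst hqq hpq hdd hqd2

end Fermions

theorem fswap_exponential_conjugation_general
    (A : Type*) [NormedRing A] [NormedAlgebra ℂ A] [CompleteSpace A]
    (ap aq apd aqd : A)
    (hpp : ap * apd + apd * ap = 1)
    (hqq : aq * aqd + aqd * aq = 1)
    (hpq : ap * aqd + aqd * ap = 0)
    (hqp : aq * apd + apd * aq = 0)
    (hdd : apd * aqd + aqd * apd = 0)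
    (hpd2 : apd * apd = 0) (hqd2 : aqd * aqd = 0)
    (θ : ℝ)
    (fswap : A)
    (hfswap : fswap = 1 + apd * aq + aqd * ap - apd * ap - aqd * aq) :
    NormedSpace.exp ((Complex.I * (θ : ℂ)) • fswap) * apd
        * NormedSpace.exp ((-(Complex.I * (θ : ℂ))) • fswap)
      = (2 : ℂ)⁻¹ • (Complex.exp (-(2 * Complex.I * (θ : ℂ))) • (apd - aqd) + (apd + aqd))
    ∧ NormedSpace.exp ((Complex.I * (θ : ℂ)) • fswap) * aqd
        * NormedSpace.exp ((-(Complex.I * (θ : ℂ))) • fswap)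
      = (2 : ℂ)⁻¹ • (Complex.exp (-(2 * Complex.I * (θ : ℂ))) • (aqd - apd) + (apd + aqd)) := by
  have hp := fermionicSwap_mul_sub_mul_fermionicSwap_fst hpp hqp hdd hpd2
  have hq := fermionicSwap_mul_sub_mul_fermionicSwap_snd hqq hpq hdd hqd2
  rw [← fermionicSwap] at hfswap
  rw [← hfswap] at hp hq
  have hdiff_eig : fswap * (apd - aqd) - (apd - aqd) * fswap = (-2 : ℂ) • (apd - aqd) := by
    rw [mul_sub, sub_mul, sub_sub_sub_comm, hp, hq]
    module
  have hsum_eig : fswap * (apd + aqd) - (apd + aqd) * fswap = (0 : ℂ) • (apd + aqd) := by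
    rw [mul_add, add_mul, add_sub_add_comm, hp, hq]
    module
  have hdiff :=
    NormedSpace.exp_smul_mul_mul_exp_neg_smul_of_mul_sub_mul_eq_smul hdiff_eig (Complex.I * θ)
  have hsum :=
    NormedSpace.exp_smul_mul_mul_exp_neg_smul_of_mul_sub_mul_eq_smul hsum_eig (Complex.I * θ)
  rw [mul_zero, NormedSpace.exp_zero, one_smul] at hsum
  rw [← Complex.exp_eq_exp_ℂ, show Complex.I * θ * -2 = -(2 * Complex.I * θ) by ring] at hdiff
  constructor
  · have hsplit : apd = (2 : ℂ)⁻¹ • ((apd - aqd) + (apd + aqd)) := by module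
    conv_lhs => rw [hsplit, mul_smul_comm, smul_mul_assoc, mul_add, add_mul, hdiff, hsum]
  · have hsplit : aqd = (2 : ℂ)⁻¹ • (-(apd - aqd) + (apd + aqd)) := by module
    conv_lhs => rw [hsplit, mul_smul_comm, smul_mul_assoc, mul_add, add_mul, mul_neg, neg_mul,
      hdiff, hsum]
    module

/-- For any real `θ` and the fermionic swap operator `f_swap` on two distinct modes,
`e^{i f_swap θ} a_p† e^{−i f_swap θ} = (1/2)(e^{−2iθ}(a_p† − a_q†) + (a_p† + a_q†))`,
and symmetrically for `a_q†`. -/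
theorem fswap_exponential_conjugation
    (A : Type*) [NormedRing A] [NormedAlgebra ℂ A] [CompleteSpace A]
    (ap aq apd aqd : A)
    (hpp : ap * apd + apd * ap = 1)
    (hqq : aq * aqd + aqd * aq = 1)
    (hpq : ap * aqd + aqd * ap = 0)
    (hqp : aq * apd + apd * aq = 0)
    (haa : ap * aq + aq * ap = 0)
    (hdd : apd * aqd + aqd * apd = 0)
    (hp2 : ap * ap = 0) (hq2 : aq * aq = 0)
    (hpd2 : apd * apd = 0) (hqd2 : aqd * aqd = 0)
    (θ : ℝ)
    (fswap : A)
    (hfswap : fswap = 1 + apd * aq + aqd * ap - apd * ap - aqd * aq) :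
    NormedSpace.exp ((Complex.I * (θ : ℂ)) • fswap) * apd
        * NormedSpace.exp ((-(Complex.I * (θ : ℂ))) • fswap)
      = (2 : ℂ)⁻¹ • (Complex.exp (-(2 * Complex.I * (θ : ℂ))) • (apd - aqd) + (apd + aqd))
    ∧ NormedSpace.exp ((Complex.I * (θ : ℂ)) • fswap) * aqd
        * NormedSpace.exp ((-(Complex.I * (θ : ℂ))) • fswap)
      = (2 : ℂ)⁻¹ • (Complex.exp (-(2 * Complex.I * (θ : ℂ))) • (aqd - apd) + (apd + aqd)) :=
  fswap_exponential_conjugation_general A ap aq apd aqd hpp hqq hpq hqp hdd hpd2 hqd2 θ fswap hfswap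
end

section
/- Define F₀† = e^{−i(π/4) a_q† a_q} e^{i(π/4) a_p† a_p} e^{i(π/4) f_swap} e^{−i(π/2) a_q† a_q} on distinct fermionic modes p ≠ q. Then F₀† a_p† F₀ = (a_p† + a_q†)/√2 and F₀† a_q† F₀ = (a_p† − a_q†)/√2, i.e., F₀ implements a two-mode fermionic Fourier (Hadamard) transform on the creation operators. -/
/-!
If `[u, z] = μ z` then `e^{cu} z e^{-cu} = e^{cμ} z`, so each factor of `F₀†` acts diagonally
on a suitable basis of the span of `a_p†, a_q†`. A number operator `n = b† b` satisfies
`[n, b†] = b†` and commutes with everything anticommuting with `b` and `b†`: conjugation by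
`e^{iφ n_q}` multiplies `a_q†` by `e^{iφ}` and fixes `a_p†`. Moreover `f_swap = 1 - 2 n₋`, where
`n₋` is the number operator of the mode `(a_p - a_q)/√2`, so conjugation by `e^{iθ f_swap}` fixes
`a_p† + a_q†` and multiplies `a_p† - a_q†` by `e^{-2iθ}`. Composing the four diagonal actions
gives the Hadamard matrix.
-/

open Complex

section Commutators

variable {R : Type*} [Ring R] {b bd x : R}

theorem numberOp_commutator_create (h : b * bd + bd * b = 1) (hbd : bd * bd = 0) :
    bd * b * bd - bd * (bd * b) = bd := by
  rw [mul_assoc, ← mul_assoc bd bd, hbd, zero_mul, sub_zero,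
    eq_sub_of_add_eq h, mul_sub, mul_one, ← mul_assoc, hbd, zero_mul, sub_zero]

theorem numberOp_commutator_eq_zero (hb : b * x + x * b = 0) (hbd : bd * x + x * bd = 0) :
    bd * b * x - x * (bd * b) = 0 := by
  rw [mul_assoc, eq_neg_of_add_eq_zero_left hb, mul_neg, ← mul_assoc,
    eq_neg_of_add_eq_zero_left hbd, neg_mul, neg_neg, mul_assoc, sub_self]

end Commutators

section ConjExp

variable {A : Type*} [NormedRing A] [NormedAlgebra ℂ A]

noncomputable def conjExp (c : ℂ) (u x : A) : A :=
  NormedSpace.exp (c • u) * x * NormedSpace.exp ((-c) • u)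

theorem conjExp_smul_add_smul (c : ℂ) (u x y : A) (α β : ℂ) :
    conjExp c u (α • x + β • y) = α • conjExp c u x + β • conjExp c u y := by
  simp only [conjExp, mul_add, add_mul, mul_smul_comm, smul_mul_assoc]

theorem conjExp_of_commutator_eq_smul [CompleteSpace A] {u z : A} {μ : ℂ}
    (h : u * z - z * u = μ • z) (c : ℂ) :
    conjExp c u z = Complex.exp (c * μ) • z := by
  -- Mathlib's lemmas on `NormedSpace.exp` are stated for normed `ℚ`-algebras.
  let : NormedAlgebra ℚ A := NormedAlgebra.restrictScalars ℚ ℂ A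
  have hz : SemiconjBy z (c • u + algebraMap ℂ A (c * μ)) (c • u) := by
    rw [sub_eq_iff_eq_add] at h
    simp only [SemiconjBy, mul_add, mul_smul_comm, smul_mul_assoc, h,
      Algebra.algebraMap_eq_smul_one, mul_one, smul_add, smul_smul]
    module
  have hexp : NormedSpace.exp (c • u) * NormedSpace.exp ((-c) • u) = 1 := by
    rw [← NormedSpace.exp_add_of_commute ((Commute.refl u).smul_left _ |>.smul_right _),
      ← add_smul, add_neg_cancel, zero_smul, NormedSpace.exp_zero]
  have hexp_mul :
      NormedSpace.exp (c • u) * z = Complex.exp (c * μ) • z * NormedSpace.exp (c • u) := by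
    have := hz.exp_right
    rw [NormedSpace.exp_add_of_commute (Algebra.commutes _ _).symm,
      ← NormedSpace.algebraMap_exp_comm, ← Complex.exp_eq_exp_ℂ, ← Algebra.commutes,
      SemiconjBy, ← mul_assoc, Algebra.algebraMap_eq_smul_one, mul_smul_one] at this
    exact this.symm
  rw [conjExp, hexp_mul, smul_mul_assoc, smul_mul_assoc, mul_assoc, hexp, mul_one]

end ConjExp

section Swap

variable {R : Type*} [Ring R] [Algebra ℂ R] {ap aq apd aqd : R}

-- `b = (a_p - a_q)/2` and `b† = a_p† - a_q†` form a fermionic mode.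
theorem swap_eq_one_sub_two_smul :
    1 + apd * aq + aqd * ap - apd * ap - aqd * aq
      = 1 - (2 : ℂ) • ((apd - aqd) * ((2 : ℂ)⁻¹ • (ap - aq))) := by
  rw [mul_smul_comm, smul_smul, mul_inv_cancel₀ two_ne_zero, one_smul]
  noncomm_ring

theorem one_sub_two_smul_commutator {n z : R} :
    (1 - (2 : ℂ) • n) * z - z * (1 - (2 : ℂ) • n) = (-2 : ℂ) • (n * z - z * n) := by
  simp only [sub_mul, mul_sub, one_mul, mul_one, smul_mul_assoc, mul_smul_comm]
  module

theorem swap_commutator_sub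
    (hpp : ap * apd + apd * ap = 1) (hqq : aq * aqd + aqd * aq = 1)
    (hpq : ap * aqd + aqd * ap = 0) (hqp : aq * apd + apd * aq = 0)
    (hdd : apd * aqd + aqd * apd = 0) (hpd2 : apd * apd = 0) (hqd2 : aqd * aqd = 0) :
    (1 + apd * aq + aqd * ap - apd * ap - aqd * aq) * (apd - aqd)
      - (apd - aqd) * (1 + apd * aq + aqd * ap - apd * ap - aqd * aq)
      = (-2 : ℂ) • (apd - aqd) := by
  have hmode : (2 : ℂ)⁻¹ • (ap - aq) * (apd - aqd) + (apd - aqd) * ((2 : ℂ)⁻¹ • (ap - aq)) = 1 := by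
    calc _ = (2 : ℂ)⁻¹ • ((ap * apd + apd * ap) + (aq * aqd + aqd * aq)
          - (ap * aqd + aqd * ap) - (aq * apd + apd * aq)) := by
          rw [smul_mul_assoc, mul_smul_comm, ← smul_add]; noncomm_ring
      _ = 1 := by
          rw [hpp, hqq, hpq, hqp, sub_zero, sub_zero, ← two_smul ℂ, smul_smul,
            inv_mul_cancel₀ two_ne_zero, one_smul]
  have hsq : (apd - aqd) * (apd - aqd) = 0 := by
    calc _ = apd * apd + aqd * aqd - (apd * aqd + aqd * apd) := by noncomm_ring
      _ = 0 := by rw [hpd2, hqd2, hdd, add_zero, sub_zero]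
  rw [swap_eq_one_sub_two_smul, one_sub_two_smul_commutator,
    numberOp_commutator_create hmode hsq]

theorem swap_commutator_add
    (hpp : ap * apd + apd * ap = 1) (hqq : aq * aqd + aqd * aq = 1)
    (hpq : ap * aqd + aqd * ap = 0) (hqp : aq * apd + apd * aq = 0)
    (hpd2 : apd * apd = 0) (hqd2 : aqd * aqd = 0) :
    (1 + apd * aq + aqd * ap - apd * ap - aqd * aq) * (apd + aqd)
      - (apd + aqd) * (1 + apd * aq + aqd * ap - apd * ap - aqd * aq) = 0 := by
  have hb : (2 : ℂ)⁻¹ • (ap - aq) * (apd + aqd) + (apd + aqd) * ((2 : ℂ)⁻¹ • (ap - aq)) = 0 := by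
    calc _ = (2 : ℂ)⁻¹ • ((ap * apd + apd * ap) - (aq * aqd + aqd * aq)
          + (ap * aqd + aqd * ap) - (aq * apd + apd * aq)) := by
          rw [smul_mul_assoc, mul_smul_comm, ← smul_add]; noncomm_ring
      _ = 0 := by rw [hpp, hqq, hpq, hqp, sub_self, add_zero, sub_zero, smul_zero]
  have hbd : (apd - aqd) * (apd + aqd) + (apd + aqd) * (apd - aqd) = 0 := by
    calc _ = (2 : ℤ) • (apd * apd - aqd * aqd) := by noncomm_ring
      _ = 0 := by rw [hpd2, hqd2, sub_self, smul_zero]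
  rw [swap_eq_one_sub_two_smul, one_sub_two_smul_commutator,
    numberOp_commutator_eq_zero hb hbd, smul_zero]

end Swap

theorem exp_pi_div_four_mul_I : Complex.exp (Real.pi / 4 * I) = (1 + I) / Real.sqrt 2 := by
  have h : (Real.pi : ℂ) / 4 = ((Real.pi / 4 : ℝ) : ℂ) := by push_cast; ring
  have hs : (Real.sqrt 2 : ℂ) ^ 2 = 2 := by exact_mod_cast Real.sq_sqrt zero_le_two
  rw [h, exp_mul_I, ← ofReal_cos, ← ofReal_sin, Real.cos_pi_div_four, Real.sin_pi_div_four]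
  field_simp
  push_cast
  linear_combination (1 + I) * hs / 2

theorem exp_neg_pi_div_four_mul_I :
    Complex.exp (-(Real.pi / 4 * I)) = (1 - I) / Real.sqrt 2 := by
  have hs : (Real.sqrt 2 : ℂ) ^ 2 = 2 := by exact_mod_cast Real.sq_sqrt zero_le_two
  have hI : (1 + I) ≠ 0 := by
    intro h; simpa using congrArg Complex.re h
  rw [Complex.exp_neg, exp_pi_div_four_mul_I, inv_div]
  field_simp
  linear_combination hs + I_sq

section TwoModes

variable {A : Type*} [NormedRing A] [NormedAlgebra ℂ A] [CompleteSpace A] {ap aq apd aqd : A}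

theorem conjExp_aqd_mul_aq (hqq : aq * aqd + aqd * aq = 1) (hqd2 : aqd * aqd = 0)
    (hqp : aq * apd + apd * aq = 0) (hdd : apd * aqd + aqd * apd = 0) (c α β : ℂ) :
    conjExp c (aqd * aq) (α • apd + β • aqd) = α • apd + (Complex.exp c * β) • aqd := by
  have hp : aqd * aq * apd - apd * (aqd * aq) = (0 : ℂ) • apd := by
    rw [zero_smul]; exact numberOp_commutator_eq_zero hqp (by rwa [add_comm])
  have hq : aqd * aq * aqd - aqd * (aqd * aq) = (1 : ℂ) • aqd := by
    rw [one_smul]; exact numberOp_commutator_create hqq hqd2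
  rw [conjExp_smul_add_smul, conjExp_of_commutator_eq_smul hp,
    conjExp_of_commutator_eq_smul hq, mul_zero, Complex.exp_zero, one_smul, mul_one, smul_smul,
    mul_comm]

theorem conjExp_apd_mul_ap (hpp : ap * apd + apd * ap = 1) (hpd2 : apd * apd = 0)
    (hpq : ap * aqd + aqd * ap = 0) (hdd : apd * aqd + aqd * apd = 0) (c α β : ℂ) :
    conjExp c (apd * ap) (α • apd + β • aqd) = (Complex.exp c * α) • apd + β • aqd := by
  have hp : apd * ap * apd - apd * (apd * ap) = (1 : ℂ) • apd := by
    rw [one_smul]; exact numberOp_commutator_create hpp hpd2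
  have hq : apd * ap * aqd - aqd * (apd * ap) = (0 : ℂ) • aqd := by
    rw [zero_smul]; exact numberOp_commutator_eq_zero hpq hdd
  rw [conjExp_smul_add_smul, conjExp_of_commutator_eq_smul hp,
    conjExp_of_commutator_eq_smul hq, mul_zero, Complex.exp_zero, one_smul, mul_one, smul_smul,
    mul_comm]

theorem conjExp_swap
    (hpp : ap * apd + apd * ap = 1) (hqq : aq * aqd + aqd * aq = 1)
    (hpq : ap * aqd + aqd * ap = 0) (hqp : aq * apd + apd * aq = 0)
    (hdd : apd * aqd + aqd * apd = 0) (hpd2 : apd * apd = 0) (hqd2 : aqd * aqd = 0)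
    (c α β : ℂ) :
    conjExp c (1 + apd * aq + aqd * ap - apd * ap - aqd * aq) (α • apd + β • aqd)
      = ((α + β + (α - β) * Complex.exp (-2 * c)) / 2) • apd
        + ((α + β - (α - β) * Complex.exp (-2 * c)) / 2) • aqd := by
  have hadd := conjExp_of_commutator_eq_smul (μ := 0)
    ((swap_commutator_add hpp hqq hpq hqp hpd2 hqd2).trans (zero_smul ℂ _).symm) c
  have hsub := conjExp_of_commutator_eq_smul
    (swap_commutator_sub hpp hqq hpq hqp hdd hpd2 hqd2) c
  calc _ = conjExp c (1 + apd * aq + aqd * ap - apd * ap - aqd * aq)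
        (((α + β) / 2) • (apd + aqd) + ((α - β) / 2) • (apd - aqd)) := by
        congr 1; module
    _ = ((α + β) / 2) • (apd + aqd)
        + ((α - β) / 2 * Complex.exp (-2 * c)) • (apd - aqd) := by
        rw [conjExp_smul_add_smul, hadd, hsub, mul_zero, Complex.exp_zero, one_smul, smul_smul,
          mul_comm c]
    _ = _ := by module

theorem conjExp_hadamard
    (hpp : ap * apd + apd * ap = 1) (hqq : aq * aqd + aqd * aq = 1)
    (hpq : ap * aqd + aqd * ap = 0) (hqp : aq * apd + apd * aq = 0)
    (hdd : apd * aqd + aqd * apd = 0) (hpd2 : apd * apd = 0) (hqd2 : aqd * aqd = 0)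
    (α β : ℂ) :
    conjExp (-(Real.pi / 4 * I)) (aqd * aq) (conjExp (Real.pi / 4 * I) (apd * ap)
      (conjExp (Real.pi / 4 * I) (1 + apd * aq + aqd * ap - apd * ap - aqd * aq)
        (conjExp (-(Real.pi / 2 * I)) (aqd * aq) (α • apd + β • aqd))))
      = (Real.sqrt 2 : ℂ)⁻¹ • ((α + β) • apd + (α - β) • aqd) := by
  rw [conjExp_aqd_mul_aq hqq hqd2 hqp hdd, conjExp_swap hpp hqq hpq hqp hdd hpd2 hqd2,
    conjExp_apd_mul_ap hpp hpd2 hpq hdd, conjExp_aqd_mul_aq hqq hqd2 hqp hdd,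
    show -2 * (Real.pi / 4 * I) = -(Real.pi / 2 * I) by ring,
    show -(Real.pi / 2 * I) = -Real.pi / 2 * I by ring, exp_neg_pi_div_two_mul_I,
    exp_pi_div_four_mul_I, exp_neg_pi_div_four_mul_I]
  match_scalars <;> field_simp <;> ring_nf <;> simp only [I_sq, I_pow_three] <;> ring

end TwoModes

theorem two_mode_fourier_transform_general
    (A : Type*) [NormedRing A] [NormedAlgebra ℂ A] [CompleteSpace A]
    (ap aq apd aqd : A)
    (hpp : ap * apd + apd * ap = 1)
    (hqq : aq * aqd + aqd * aq = 1)
    (hpq : ap * aqd + aqd * ap = 0)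
    (hqp : aq * apd + apd * aq = 0)
    (hdd : apd * aqd + aqd * apd = 0)
    (hpd2 : apd * apd = 0) (hqd2 : aqd * aqd = 0)
    (fswap np nq F0d F0 : A)
    (hfswap : fswap = 1 + apd * aq + aqd * ap - apd * ap - aqd * aq)
    (hnp : np = apd * ap) (hnq : nq = aqd * aq)
    (hF0d : F0d = NormedSpace.exp ((-(((Real.pi : ℂ) / 4) * Complex.I)) • nq)
        * NormedSpace.exp ((((Real.pi : ℂ) / 4) * Complex.I) • np)
        * NormedSpace.exp ((((Real.pi : ℂ) / 4) * Complex.I) • fswap)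
        * NormedSpace.exp ((-(((Real.pi : ℂ) / 2) * Complex.I)) • nq))
    (hF0 : F0 = NormedSpace.exp ((((Real.pi : ℂ) / 2) * Complex.I) • nq)
        * NormedSpace.exp ((-(((Real.pi : ℂ) / 4) * Complex.I)) • fswap)
        * NormedSpace.exp ((-(((Real.pi : ℂ) / 4) * Complex.I)) • np)
        * NormedSpace.exp ((((Real.pi : ℂ) / 4) * Complex.I) • nq)) :
    F0d * apd * F0 = ((Real.sqrt 2 : ℂ))⁻¹ • (apd + aqd)
    ∧ F0d * aqd * F0 = ((Real.sqrt 2 : ℂ))⁻¹ • (apd - aqd) := by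
  subst hfswap hnp hnq hF0d hF0
  have h := conjExp_hadamard hpp hqq hpq hqp hdd hpd2 hqd2
  simp only [conjExp, neg_neg, mul_assoc] at h ⊢
  constructor
  · simpa using h 1 0
  · simpa [smul_sub, sub_eq_add_neg] using h 0 1

/-- The two-mode fermionic Fourier (Hadamard) transform:
with `F₀† = e^{−i(π/4) n_q} e^{i(π/4) n_p} e^{i(π/4) f_swap} e^{−i(π/2) n_q}` and
`F₀` its inverse, one has `F₀† a_p† F₀ = (a_p† + a_q†)/√2` and
`F₀† a_q† F₀ = (a_p† − a_q†)/√2`. -/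
theorem two_mode_fourier_transform
    (A : Type*) [NormedRing A] [NormedAlgebra ℂ A] [CompleteSpace A]
    (ap aq apd aqd : A)
    (hpp : ap * apd + apd * ap = 1)
    (hqq : aq * aqd + aqd * aq = 1)
    (hpq : ap * aqd + aqd * ap = 0)
    (hqp : aq * apd + apd * aq = 0)
    (haa : ap * aq + aq * ap = 0)
    (hdd : apd * aqd + aqd * apd = 0)
    (hp2 : ap * ap = 0) (hq2 : aq * aq = 0)
    (hpd2 : apd * apd = 0) (hqd2 : aqd * aqd = 0)
    (fswap np nq F0d F0 : A)
    (hfswap : fswap = 1 + apd * aq + aqd * ap - apd * ap - aqd * aq)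
    (hnp : np = apd * ap) (hnq : nq = aqd * aq)
    (hF0d : F0d = NormedSpace.exp ((-(((Real.pi : ℂ) / 4) * Complex.I)) • nq)
        * NormedSpace.exp ((((Real.pi : ℂ) / 4) * Complex.I) • np)
        * NormedSpace.exp ((((Real.pi : ℂ) / 4) * Complex.I) • fswap)
        * NormedSpace.exp ((-(((Real.pi : ℂ) / 2) * Complex.I)) • nq))
    (hF0 : F0 = NormedSpace.exp ((((Real.pi : ℂ) / 2) * Complex.I) • nq)
        * NormedSpace.exp ((-(((Real.pi : ℂ) / 4) * Complex.I)) • fswap)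
        * NormedSpace.exp ((-(((Real.pi : ℂ) / 4) * Complex.I)) • np)
        * NormedSpace.exp ((((Real.pi : ℂ) / 4) * Complex.I) • nq)) :
    F0d * apd * F0 = ((Real.sqrt 2 : ℂ))⁻¹ • (apd + aqd)
    ∧ F0d * aqd * F0 = ((Real.sqrt 2 : ℂ))⁻¹ • (apd - aqd) :=
  two_mode_fourier_transform_general A ap aq apd aqd hpp hqq hpq hqp hdd hpd2 hqd2 fswap np nq F0d
    F0 hfswap hnp hnq hF0d hF0
end

section
/- Let C_M be the cycle graph on M = 2mn vertices labeled by Z_M, and let P_M be the permutation sending even x to x−2 mod M and odd x to x+2 mod M. Then an edge (x,y) belongs to the union C_M ∪ P_M(C_M) ∪ ⋯ ∪ P_M^{M/2}(C_M) if and only if x − y ≡ 1 (mod 2). -/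
/-- The staggered-swap relabeling: even labels shift by `−2`, odd labels by `+2`
(mod `M`). -/
def cyclePerm (M : ℕ) (x : ZMod M) : ZMod M :=
  if x.val % 2 = 0 then x - 2 else x + 2

/-!
For even `M` the relabeling `cyclePerm M` preserves parity, and `k` rounds of it move an even
vertex by `-2k` and an odd one by `+2k`. Hence the image under `(cyclePerm M)^[k]` of a cycle
edge `{a, a + 1}` still joins vertices of opposite parity. Conversely, for `x` even and `y` odd
let `d < M` represent `y - x` (it is odd) and put `k = (d + 1) / 4 ≤ M / 2`; then `4k = d ∓ 1`, so
`x + 2k` and `y - 2k` are adjacent on the cycle and are carried to `x` and `y` in `k` rounds.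
-/

lemma Nat.cast_eq_four_mul_add_one_or_sub_one {R : Type*} [Ring R] {d : ℕ} (hd : d % 2 = 1) :
    (d : R) = 4 * ((d + 1) / 4 : ℕ) + 1 ∨ (d : R) = 4 * ((d + 1) / 4 : ℕ) - 1 := by
  rcases Nat.odd_mod_four_iff.mp hd with h | h
  · left
    conv_lhs => rw [show d = 4 * ((d + 1) / 4) + 1 by omega]
    push_cast; rfl
  · right
    rw [eq_sub_iff_add_eq]
    conv_lhs => rw [← Nat.cast_one, ← Nat.cast_add, show d + 1 = 4 * ((d + 1) / 4) by omega]
    push_cast; rfl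

namespace ZMod

variable {M d : ℕ} [NeZero M]

lemma val_add_natCast_mod_of_dvd (h : d ∣ M) (x : ZMod M) (n : ℕ) :
    (x + n).val % d = (x.val + n) % d := by
  rw [val_add, Nat.mod_mod_of_dvd _ h, val_natCast, Nat.add_mod, Nat.mod_mod_of_dvd _ h,
    ← Nat.add_mod]

end ZMod

section CyclePerm

variable {M : ℕ} [NeZero M]

lemma val_add_two_mul_mod_two (hM : 2 ∣ M) (x : ZMod M) (k : ℕ) :
    (x + 2 * k).val % 2 = x.val % 2 := by
  have := ZMod.val_add_natCast_mod_of_dvd hM x (2 * k)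
  push_cast at this
  omega

lemma val_sub_two_mul_mod_two (hM : 2 ∣ M) (x : ZMod M) (k : ℕ) :
    (x - 2 * k).val % 2 = x.val % 2 := by
  conv_rhs => rw [← sub_add_cancel x (2 * (k : ZMod M)), val_add_two_mul_mod_two hM]

lemma val_add_one_mod_two (hM : 2 ∣ M) (x : ZMod M) : (x + 1).val % 2 = (x.val + 1) % 2 := by
  simpa using ZMod.val_add_natCast_mod_of_dvd hM x 1

lemma val_cyclePerm_mod_two (hM : 2 ∣ M) (x : ZMod M) :
    (cyclePerm M x).val % 2 = x.val % 2 := by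
  unfold cyclePerm
  split
  · simpa using val_sub_two_mul_mod_two hM x 1
  · simpa using val_add_two_mul_mod_two hM x 1

lemma val_iterate_cyclePerm_mod_two (hM : 2 ∣ M) (k : ℕ) (x : ZMod M) :
    ((cyclePerm M)^[k] x).val % 2 = x.val % 2 := by
  induction k with
  | zero => rfl
  | succ k ih => rw [Function.iterate_succ_apply', val_cyclePerm_mod_two hM, ih]

lemma iterate_cyclePerm_of_even (hM : 2 ∣ M) {x : ZMod M} (hx : x.val % 2 = 0) (k : ℕ) :
    (cyclePerm M)^[k] x = x - 2 * k := by
  induction k with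
  | zero => simp
  | succ k ih =>
    have hpar : (x - 2 * k).val % 2 = 0 := by rwa [val_sub_two_mul_mod_two hM]
    rw [Function.iterate_succ_apply', ih, cyclePerm, if_pos hpar]
    push_cast
    ring

lemma iterate_cyclePerm_of_odd (hM : 2 ∣ M) {x : ZMod M} (hx : x.val % 2 = 1) (k : ℕ) :
    (cyclePerm M)^[k] x = x + 2 * k := by
  induction k with
  | zero => simp
  | succ k ih =>
    have hpar : (x + 2 * k).val % 2 ≠ 0 := by rw [val_add_two_mul_mod_two hM]; omega
    rw [Function.iterate_succ_apply', ih, cyclePerm, if_neg hpar]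
    push_cast
    ring

lemma val_add_val_iterate_cyclePerm_add_one_mod_two (hM : 2 ∣ M) (k : ℕ) (a : ZMod M) :
    (((cyclePerm M)^[k] a).val + ((cyclePerm M)^[k] (a + 1)).val) % 2 = 1 := by
  have := val_add_one_mod_two hM a
  rw [Nat.add_mod, val_iterate_cyclePerm_mod_two hM, val_iterate_cyclePerm_mod_two hM]
  omega

lemma exists_iterate_cyclePerm_adjacent (hM : 2 ∣ M) {x y : ZMod M}
    (hx : x.val % 2 = 0) (hy : y.val % 2 = 1) :
    ∃ k ≤ M / 2, ∃ a b : ZMod M, (b = a + 1 ∨ a = b + 1) ∧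
      x = (cyclePerm M)^[k] a ∧ y = (cyclePerm M)^[k] b := by
  set d := (y - x).val
  have hyx : y = x + d := by simp [d]
  have hd : d % 2 = 1 := by
    have := ZMod.val_add_natCast_mod_of_dvd hM x d
    rw [← hyx] at this
    omega
  set k := (d + 1) / 4
  have hk : k ≤ M / 2 := by have := ZMod.val_lt (y - x); omega
  have ha : (x + 2 * k).val % 2 = 0 := by rwa [val_add_two_mul_mod_two hM]
  have hb : (y - 2 * k).val % 2 = 1 := by rwa [val_sub_two_mul_mod_two hM]
  refine ⟨k, hk, x + 2 * k, y - 2 * k, ?_, ?_, ?_⟩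
  · rcases Nat.cast_eq_four_mul_add_one_or_sub_one (R := ZMod M) hd with h | h
    · left; rw [hyx, h]; ring
    · right; rw [hyx, h]; ring
  · rw [iterate_cyclePerm_of_even hM ha]; ring
  · rw [iterate_cyclePerm_of_odd hM hb]; ring

end CyclePerm

/-- Let `C_M` be the cycle graph on `M = 2mn` vertices (edges between `x` and `x+1`
mod `M`) and `P_M` the permutation sending even `x` to `x−2` and odd `x` to `x+2`
mod `M`.  Then `(x,y)` is an edge of `C_M ∪ P_M(C_M) ∪ ⋯ ∪ P_M^{M/2}(C_M)` if and
only if `x − y ≡ 1 (mod 2)`. -/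
theorem cycle_union_edges_iff_opposite_parity
    (M m n : ℕ) (hm : 1 ≤ m) (hn : 1 ≤ n) (hM : M = 2 * m * n)
    (x y : ZMod M) :
    (∃ k ≤ M / 2, ∃ a b : ZMod M, (b = a + 1 ∨ a = b + 1) ∧
        x = (cyclePerm M)^[k] a ∧ y = (cyclePerm M)^[k] b)
      ↔ (x.val + y.val) % 2 = 1 := by
  have : NeZero M := ⟨by subst hM; positivity⟩
  have h2M : 2 ∣ M := ⟨m * n, by rw [hM, mul_assoc]⟩
  constructor
  · rintro ⟨k, -, a, b, (rfl | rfl), rfl, rfl⟩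
    · exact val_add_val_iterate_cyclePerm_add_one_mod_two h2M k a
    · rw [add_comm]; exact val_add_val_iterate_cyclePerm_add_one_mod_two h2M k b
  · intro hxy
    rcases Nat.mod_two_eq_zero_or_one x.val with hx | hx
    · exact exists_iterate_cyclePerm_adjacent h2M hx (by omega)
    · obtain ⟨k, hk, a, b, hab, hy, hx⟩ :=
        exists_iterate_cyclePerm_adjacent h2M (x := y) (by omega) hx
      exact ⟨k, hk, b, a, hab.symm, hx, hy⟩
end

section
/- For every even x ∈ Z_M (M = 2mn) and every q ≥ 1, the edges (x, x+4q−1 mod M) and (x, x+4q+1 mod M) belong to P_M^q(C_M), where C_M is the M-cycle and P_M shifts even labels by −2 and odd labels by +2 mod M. -/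
theorem ZMod.natCast_val_eq_castHom {M : ℕ} (h2 : 2 ∣ M) (x : ZMod M) :
    (x.val : ZMod 2) = castHom h2 (ZMod 2) x := by
  rcases M with _ | M
  · exact natAbs_mod_two x
  · rw [natCast_val, castHom_apply]

section
variable {M : ℕ} (h2 : 2 ∣ M)

local notation "parity" => ZMod.castHom h2 (ZMod 2)

theorem ZMod.val_mod_two_eq_zero_iff (x : ZMod M) : x.val % 2 = 0 ↔ parity x = 0 := by
  rw [← natCast_val_eq_castHom, natCast_eq_zero_iff, Nat.dvd_iff_mod_eq_zero]

theorem ZMod.castHom_two : parity (2 : ZMod M) = 0 := by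
  rw [map_ofNat]; rfl

theorem cyclePerm_iterate_of_even {x : ZMod M} (hx : parity x = 0) (q : ℕ) :
    (cyclePerm M)^[q] x = x - 2 * q := by
  induction q generalizing x with
  | zero => simp
  | succ q ih =>
    have hstep : cyclePerm M x = x - 2 := if_pos ((ZMod.val_mod_two_eq_zero_iff h2 x).2 hx)
    have hpar : parity (x - 2) = 0 := by rw [map_sub, hx, ZMod.castHom_two, sub_zero]
    rw [Function.iterate_succ_apply, hstep, ih hpar]
    push_cast
    ring

theorem cyclePerm_iterate_of_odd {x : ZMod M} (hx : parity x = 1) (q : ℕ) :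
    (cyclePerm M)^[q] x = x + 2 * q := by
  induction q generalizing x with
  | zero => simp
  | succ q ih =>
    have hstep : cyclePerm M x = x + 2 :=
      if_neg (by rw [ZMod.val_mod_two_eq_zero_iff h2, hx]; decide)
    have hpar : parity (x + 2) = 1 := by rw [map_add, hx, ZMod.castHom_two, add_zero]
    rw [Function.iterate_succ_apply, hstep, ih hpar]
    push_cast
    ring

end

theorem shifted_cycle_edges_general
    (M m n : ℕ) (hM : M = 2 * m * n)
    (x : ZMod M) (hx : x.val % 2 = 0) (q : ℕ) (hq : 1 ≤ q) :
    (∃ a b : ZMod M, (b = a + 1 ∨ a = b + 1) ∧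
        (cyclePerm M)^[q] a = x ∧ (cyclePerm M)^[q] b = x + ((4 * q - 1 : ℕ) : ZMod M))
    ∧ (∃ a b : ZMod M, (b = a + 1 ∨ a = b + 1) ∧
        (cyclePerm M)^[q] a = x ∧ (cyclePerm M)^[q] b = x + ((4 * q + 1 : ℕ) : ZMod M)) := by
  have h2 : 2 ∣ M := ⟨m * n, by rw [hM, mul_assoc]⟩
  set parity := ZMod.castHom h2 (ZMod 2)
  have hx : parity x = 0 := (ZMod.val_mod_two_eq_zero_iff h2 x).1 hx
  set a := x + 2 * (q : ZMod M)
  have ha : parity a = 0 := by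
    rw [map_add, map_mul, hx, ZMod.castHom_two, zero_mul, add_zero]
  have hxa : (cyclePerm M)^[q] a = x := by rw [cyclePerm_iterate_of_even h2 ha]; ring
  refine ⟨⟨a, a - 1, Or.inr (sub_add_cancel a 1).symm, hxa, ?_⟩, ⟨a, a + 1, Or.inl rfl, hxa, ?_⟩⟩
  · rw [cyclePerm_iterate_of_odd h2 (by rw [map_sub, ha, map_one]; rfl), Nat.cast_sub (by omega)]
    push_cast
    ring
  · rw [cyclePerm_iterate_of_odd h2 (by rw [map_add, ha, map_one, zero_add])]
    push_cast
    ring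

/-- For every even `x ∈ Z_M` (`M = 2mn`) and every `q ≥ 1`, the edges
`(x, x+4q−1 mod M)` and `(x, x+4q+1 mod M)` belong to `P_M^q(C_M)`, where `C_M`
is the `M`-cycle and `P_M` shifts even labels by `−2` and odd labels by `+2`
mod `M`. -/
theorem shifted_cycle_edges
    (M m n : ℕ) (hm : 1 ≤ m) (hn : 1 ≤ n) (hM : M = 2 * m * n)
    (x : ZMod M) (hx : x.val % 2 = 0) (q : ℕ) (hq : 1 ≤ q) :
    (∃ a b : ZMod M, (b = a + 1 ∨ a = b + 1) ∧
        (cyclePerm M)^[q] a = x ∧ (cyclePerm M)^[q] b = x + ((4 * q - 1 : ℕ) : ZMod M))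
    ∧ (∃ a b : ZMod M, (b = a + 1 ∨ a = b + 1) ∧
        (cyclePerm M)^[q] a = x ∧ (cyclePerm M)^[q] b = x + ((4 * q + 1 : ℕ) : ZMod M)) :=
  shifted_cycle_edges_general M m n hM x hx q hq
end

section
/- Depth lower bound accounting for the staggered-swap circulation: applying alternating layers U_L, U_R of disjoint transpositions along a Hamiltonian cycle on N vertices (N even), the composition (U_R U_L)^{N/2} equals the identity permutation, and during the N layers every even-parity vertex label is at some time adjacent (shares a transposition or a cycle edge) to every odd-parity vertex label. -/
/-- The "left stagger" layer of swaps along a Hamiltonian cycle on `Z_N`: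
it swaps the pairs `(2i+1, 2i+2)`, so odd labels move to `x+1` and even labels
to `x−1`. -/
def UL (N : ℕ) (x : ZMod N) : ZMod N :=
  if x.val % 2 = 1 then x + 1 else x - 1

/-- The "right stagger" layer of swaps along a Hamiltonian cycle on `Z_N`:
it swaps the pairs `(2i, 2i+1)`, so even labels move to `x+1` and odd labels
to `x−1`. -/
def UR (N : ℕ) (x : ZMod N) : ZMod N :=
  if x.val % 2 = 0 then x + 1 else x - 1

/-- The position of a label after `t` alternating staggered-swap layers
(`U_L` first, then `U_R`, then `U_L`, ...). -/
def layerPos (N : ℕ) : ℕ → ZMod N → ZMod N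
  | 0, x => x
  | t + 1, x => if t % 2 = 0 then UL N (layerPos N t x) else UR N (layerPos N t x)

lemma val_add_mod_two {N : ℕ} [NeZero N] (hdvd : 2 ∣ N) (a b : ZMod N) :
    (a + b).val % 2 = (a.val + b.val) % 2 := by
  rw [ZMod.val_add, Nat.mod_mod_of_dvd _ hdvd]

lemma val_add_one_mod_two_s19 {N : ℕ} [NeZero N] (h2 : 2 ≤ N) (hdvd : 2 ∣ N) (a : ZMod N) :
    (a + 1).val % 2 = (a.val + 1) % 2 := by
  have h1 : 1 % N = 1 := Nat.mod_eq_of_lt (by omega)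
  rw [val_add_mod_two hdvd, ZMod.val_one_eq_one_mod, h1]

lemma val_sub_one_mod_two {N : ℕ} [NeZero N] (h2 : 2 ≤ N) (hdvd : 2 ∣ N) (a : ZMod N) :
    (a - 1).val % 2 = (a.val + 1) % 2 := by
  have h := val_add_one_mod_two_s19 h2 hdvd (a - 1)
  rw [sub_add_cancel] at h
  omega

lemma even_traj {N : ℕ} [NeZero N] (h2 : 2 ≤ N) (hdvd : 2 ∣ N) (x : ZMod N)
    (hx : x.val % 2 = 0) (t : ℕ) :
    layerPos N t x = x - t ∧ (layerPos N t x).val % 2 = t % 2 := by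
  induction t with
  | zero => simpa [layerPos] using hx
  | succ t ih =>
    obtain ⟨h1, h2'⟩ := ih
    have key : layerPos N (t + 1) x = layerPos N t x - 1 := by
      rcases Nat.even_or_odd t with ht | ht
      · have ht' : t % 2 = 0 := Nat.even_iff.mp ht
        have hv : (layerPos N t x).val % 2 = 0 := by omega
        have : ¬ (layerPos N t x).val % 2 = 1 := by omega
        simp [layerPos, ht', UL, this]
      · have ht' : t % 2 = 1 := Nat.odd_iff.mp ht
        have : ¬ (layerPos N t x).val % 2 = 0 := by omega
        simp [layerPos, ht', UR, this]
    constructor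
    · rw [key, h1]
      push_cast
      ring
    · rw [key, val_sub_one_mod_two h2 hdvd]
      omega

lemma odd_traj {N : ℕ} [NeZero N] (h2 : 2 ≤ N) (hdvd : 2 ∣ N) (x : ZMod N)
    (hx : x.val % 2 = 1) (t : ℕ) :
    layerPos N t x = x + t ∧ (layerPos N t x).val % 2 = (t + 1) % 2 := by
  induction t with
  | zero => simpa [layerPos] using hx
  | succ t ih =>
    obtain ⟨h1, h2'⟩ := ih
    have key : layerPos N (t + 1) x = layerPos N t x + 1 := by
      rcases Nat.even_or_odd t with ht | ht
      · have ht' : t % 2 = 0 := Nat.even_iff.mp ht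
        have hv : (layerPos N t x).val % 2 = 1 := by omega
        simp [layerPos, ht', UL, hv]
      · have ht' : t % 2 = 1 := Nat.odd_iff.mp ht
        have hv : (layerPos N t x).val % 2 = 0 := by omega
        simp [layerPos, ht', UR, hv]
    constructor
    · rw [key, h1]
      push_cast
      ring
    · rw [key, val_add_one_mod_two_s19 h2 hdvd]
      omega

lemma iter_even {N : ℕ} [NeZero N] (h2 : 2 ≤ N) (hdvd : 2 ∣ N) (x : ZMod N)
    (hx : x.val % 2 = 0) (k : ℕ) :
    (UR N ∘ UL N)^[k] x = x - 2 * k ∧ ((UR N ∘ UL N)^[k] x).val % 2 = 0 := by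
  induction k with
  | zero => simpa using hx
  | succ k ih =>
    obtain ⟨h1, hpar⟩ := ih
    rw [Function.iterate_succ_apply']
    set a := (UR N ∘ UL N)^[k] x with ha
    have hUL : UL N a = a - 1 := by
      have : ¬ a.val % 2 = 1 := by omega
      simp [UL, this]
    have hULpar : (UL N a).val % 2 = 1 := by
      rw [hUL, val_sub_one_mod_two h2 hdvd]; omega
    have hUR : UR N (UL N a) = UL N a - 1 := by
      have : ¬ (UL N a).val % 2 = 0 := by omega
      simp [UR, this]
    have hstep : (UR N ∘ UL N) a = a - 2 := by
      rw [Function.comp_apply, hUR, hUL]; ring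
    have p2 : (a - 1 - 1).val % 2 = 0 := by
      have q1 := val_sub_one_mod_two h2 hdvd a
      have q2 := val_sub_one_mod_two h2 hdvd (a - 1)
      omega
    have e2 : a - 2 = a - 1 - 1 := by ring
    refine ⟨?_, ?_⟩
    · rw [hstep, h1]; push_cast; ring
    · rw [hstep, e2]; exact p2

lemma iter_odd {N : ℕ} [NeZero N] (h2 : 2 ≤ N) (hdvd : 2 ∣ N) (x : ZMod N)
    (hx : x.val % 2 = 1) (k : ℕ) :
    (UR N ∘ UL N)^[k] x = x + 2 * k ∧ ((UR N ∘ UL N)^[k] x).val % 2 = 1 := by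
  induction k with
  | zero => simpa using hx
  | succ k ih =>
    obtain ⟨h1, hpar⟩ := ih
    rw [Function.iterate_succ_apply']
    set a := (UR N ∘ UL N)^[k] x with ha
    have hUL : UL N a = a + 1 := by
      simp [UL, hpar]
    have hULpar : (UL N a).val % 2 = 0 := by
      rw [hUL, val_add_one_mod_two_s19 h2 hdvd]; omega
    have hUR : UR N (UL N a) = UL N a + 1 := by
      simp [UR, hULpar]
    have hstep : (UR N ∘ UL N) a = a + 2 := by
      rw [Function.comp_apply, hUR, hUL]; ring
    have p2 : (a + 1 + 1).val % 2 = 1 := by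
      have q1 := val_add_one_mod_two_s19 h2 hdvd a
      have q2 := val_add_one_mod_two_s19 h2 hdvd (a + 1)
      omega
    have e2 : a + 2 = a + 1 + 1 := by ring
    refine ⟨?_, ?_⟩
    · rw [hstep, h1]; push_cast; ring
    · rw [hstep, e2]; exact p2

/-- Applying alternating layers `U_L`, `U_R` of disjoint transpositions along a
Hamiltonian cycle on `N` vertices (`N` even): the composition `(U_R U_L)^{N/2}` is
the identity permutation, and within the `N` layers every even-parity label is at
some time adjacent (on the cycle) to every odd-parity label. -/
theorem staggered_swap_circulation
    (N n : ℕ) (hn : 1 ≤ n) (hN : N = 2 * n) :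
    ((UR N ∘ UL N)^[N / 2] = id)
    ∧ ∀ x y : ZMod N, x.val % 2 = 0 → y.val % 2 = 1 →
        ∃ t ≤ N, layerPos N t x = layerPos N t y + 1
          ∨ layerPos N t y = layerPos N t x + 1 := by
  have hNpos : 0 < N := by omega
  haveI : NeZero N := ⟨by omega⟩
  have h2 : 2 ≤ N := by omega
  have hdvd : 2 ∣ N := ⟨n, hN⟩
  have hhalf : N / 2 = n := by omega
  have hzero : ((2 * n : ℕ) : ZMod N) = 0 := by rw [← hN]; exact ZMod.natCast_self N
  push_cast at hzero
  constructor
  · funext x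
    rcases Nat.even_or_odd x.val with hx | hx
    · have hx' := Nat.even_iff.mp hx
      have h := (iter_even h2 hdvd x hx' (N / 2)).1
      rw [h, hhalf]
      simp [hzero]
    · have hx' := Nat.odd_iff.mp hx
      have h := (iter_odd h2 hdvd x hx' (N / 2)).1
      rw [h, hhalf]
      simp [hzero]
  · intro x y hx hy
    set v : ℕ := (x - y - 1).val with hv
    have hvpar : v % 2 = 0 := by
      have h1 : ((x - y - 1) + (y + 1)).val % 2 = (v + (y + 1).val) % 2 :=
        val_add_mod_two hdvd _ _
      have h2' : (x - y - 1) + (y + 1) = x := by ring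
      have h3 : (y + 1).val % 2 = 0 := by
        rw [val_add_one_mod_two_s19 h2 hdvd]; omega
      rw [h2'] at h1
      omega
    refine ⟨v / 2, ?_, Or.inl ?_⟩
    · have := ZMod.val_lt (x - y - 1)
      omega
    · have hex := (even_traj h2 hdvd x hx (v / 2)).1
      have hoy := (odd_traj h2 hdvd y hy (v / 2)).1
      rw [hex, hoy]
      have hcast : ((v : ℕ) : ZMod N) = x - y - 1 := by
        rw [hv, ZMod.natCast_val, ZMod.cast_id]
      have h2v : ((2 * (v / 2) : ℕ) : ZMod N) = x - y - 1 := by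
        rw [Nat.two_mul_div_two_of_even (Nat.even_iff.mpr hvpar), hcast]
      push_cast at h2v
      linear_combination -h2v
end
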